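/- If DTW_{μ_τ}(X,Y) > L·r for strings X, Y of length at most L, then DTW_{μ_τ}(s_r(X), s_r(Y)) > L·r/2. -/

import Mathlib

open scoped ENNReal

def isStep (p q : ℕ × ℕ) : Prop :=
  (q.1 = p.1 + 1 ∧ q.2 = p.2) ∨ (q.1 = p.1 ∧ q.2 = p.2 + 1) ∨
    (q.1 = p.1 + 1 ∧ q.2 = p.2 + 1)

/-- A warping path for strings of lengths `m`, `n` (1-based grid). -/
def IsWarpingPath (m n : ℕ) (π : List (ℕ × ℕ)) : Prop :=
  π ≠ [] ∧ π.head? = some (1, 1) ∧ π.getLast? = some (m, n) ∧ π.Chain' isStep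

/-- Cost of a path: sum of letter distances over its vertices (1-based indexing). -/
noncomputable def pathCost {α : Type*} [Inhabited α] (d : α → α → ℝ≥0∞)
    (X Y : List α) (π : List (ℕ × ℕ)) : ℝ≥0∞ :=
  (π.map (fun p => d (X.getD (p.1 - 1) default) (Y.getD (p.2 - 1) default))).sum

open Classical in
/-- DTW distance: 0 if both strings empty, otherwise the infimum of warping path costs
(`⊤` when no warping path exists, e.g. exactly one string is empty). -/
noncomputable def dtw {α : Type*} [Inhabited α] (d : α → α → ℝ≥0∞)
    (X Y : List α) : ℝ≥0∞ :=
  if X = [] ∧ Y = [] then 0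
  else ⨅ π : {π : List (ℕ × ℕ) // IsWarpingPath X.length Y.length π},
    pathCost d X Y π.1

open scoped NNReal

/-- Maximum weight among the first `n` edges on the path from `u` towards the root
(the edge above a node `w` has weight `weight w`). -/
noncomputable def upMax {V : Type*} (parent : V → V) (weight : V → ℝ≥0)
    (u : V) (n : ℕ) : ℝ≥0 :=
  (Finset.range n).sup (fun k => weight (parent^[k] u))

/-- The (well-separated) tree metric: the maximum weight of an edge on the shortest
path between `u` and `v`, expressed as the infimum over common ancestors of the
maximum edge weight on the path through that ancestor. -/
noncomputable def treeDist {V : Type*} (parent : V → V) (weight : V → ℝ≥0)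
    (u v : V) : ℝ≥0∞ :=
  ⨅ p : {p : ℕ × ℕ // parent^[p.1] u = parent^[p.2] v},
    ((max (upMax parent weight u p.1.1) (upMax parent weight v p.1.2) : ℝ≥0) : ℝ≥0∞)

/-!
Simplification moves every letter up the tree through edges of weight at most `r / 4`, so a
common ancestor of `s a` and `s b` is also one of `a` and `b`, and
`μ(a, b) ≤ max (r / 4) μ(s a, s b)`. A warping path has fewer than `|X| + |Y| ≤ 2L` cells, so
any warping path for `s(X), s(Y)` yields one for `X, Y` of cost at most `2L · r / 4 = L r / 2`
more, i.e. `DTW(X, Y) ≤ DTW(s(X), s(Y)) + L r / 2`.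
-/

lemma isStep.lt {p q : ℕ × ℕ} (h : isStep p q) : p < q := by
  rw [Prod.lt_iff]
  rcases h with ⟨h1, h2⟩ | ⟨h1, h2⟩ | ⟨h1, h2⟩ <;> omega

namespace IsWarpingPath

variable {m n : ℕ} {π : List (ℕ × ℕ)}

lemma pairwise_lt (h : IsWarpingPath m n π) : π.Pairwise (· < ·) :=
  (h.2.2.2.imp fun _ _ => isStep.lt).pairwise

lemma mem_Icc (h : IsWarpingPath m n π) {q : ℕ × ℕ} (hq : q ∈ π) :
    q ∈ Set.Icc (1, 1) (m, n) := by
  obtain ⟨t, rfl⟩ := List.head?_eq_some_iff.1 h.2.1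
  obtain ⟨init, hinit⟩ := List.getLast?_eq_some_iff.1 h.2.2.1
  have hlt := h.pairwise_lt
  constructor
  · rcases List.mem_cons.1 hq with rfl | hq
    · exact le_rfl
    · exact (List.pairwise_cons.1 hlt).1 q hq |>.le
  · rw [hinit] at hq hlt
    rcases List.mem_append.1 hq with hq | hq
    · exact (List.pairwise_append.1 hlt).2.2 q hq _ (List.mem_singleton_self _) |>.le
    · exact (List.mem_singleton.1 hq).le

/-- The anti-diagonal index `q.1 + q.2` increases strictly along the path and ranges over
`[2, m + n]`. -/
lemma length_add_one_le (h : IsWarpingPath m n π) : π.length + 1 ≤ m + n := by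
  set diag := π.map fun q => q.1 + q.2
  have hnodup : diag.Nodup := (h.pairwise_lt.map (S := (· < ·)) _ fun p q hpq => by
    rw [Prod.lt_iff] at hpq; omega).nodup
  have hsub : diag.toFinset ⊆ Finset.Icc 2 (m + n) := fun k hk => by
    obtain ⟨q, hq, rfl⟩ := List.mem_map.1 (List.mem_toFinset.1 hk)
    obtain ⟨⟨h1, h2⟩, h3, h4⟩ := h.mem_Icc hq
    exact Finset.mem_Icc.2 ⟨by omega, by omega⟩
  have hcard := Finset.card_le_card hsub
  rw [List.toFinset_card_of_nodup hnodup, List.length_map, Nat.card_Icc] at hcard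
  have hpos : 0 < π.length := List.length_pos_iff.2 h.1
  omega

end IsWarpingPath

section Transfer

variable {α β : Type*} [Inhabited α] [Inhabited β] {d : α → α → ℝ≥0∞} {d' : β → β → ℝ≥0∞}
  {f : α → β} {c : ℝ≥0∞}

lemma pathCost_le_pathCost_map_add (hd : ∀ a b, d a b ≤ d' (f a) (f b) + c)
    {X Y : List α} {π : List (ℕ × ℕ)} (hπ : IsWarpingPath X.length Y.length π) :
    pathCost d X Y π ≤ pathCost d' (X.map f) (Y.map f) π + π.length * c := by
  have hpoint : ∀ q ∈ π, d (X.getD (q.1 - 1) default) (Y.getD (q.2 - 1) default) ≤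
      d' ((X.map f).getD (q.1 - 1) default) ((Y.map f).getD (q.2 - 1) default) + c := by
    intro q hq
    obtain ⟨⟨h1, h2⟩, h3, h4⟩ := hπ.mem_Icc hq
    have hx : q.1 - 1 < X.length := by omega
    have hy : q.2 - 1 < Y.length := by omega
    simpa only [List.getD_eq_getElem _ _ hx, List.getD_eq_getElem _ _ hy,
      List.getD_eq_getElem _ _ (X.length_map f ▸ hx),
      List.getD_eq_getElem _ _ (Y.length_map f ▸ hy), List.getElem_map] using hd _ _
  refine (List.sum_le_sum hpoint).trans ?_
  simp [pathCost, List.sum_map_add, List.map_const', nsmul_eq_mul]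

lemma dtw_le_dtw_map_add (hd : ∀ a b, d a b ≤ d' (f a) (f b) + c) (X Y : List α) :
    dtw d X Y ≤ dtw d' (X.map f) (Y.map f) + (X.length + Y.length) * c := by
  by_cases h0 : X = [] ∧ Y = []
  · simp [dtw, h0]
  have h0' : ¬(X.map f = [] ∧ Y.map f = []) := by simpa only [List.map_eq_nil_iff] using h0
  rw [dtw, dtw, if_neg h0, if_neg h0', ENNReal.iInf_add]
  refine le_iInf fun ⟨π, hπ⟩ => ?_
  rw [List.length_map, List.length_map] at hπ
  calc _ ≤ pathCost d X Y π := iInf_le_of_le ⟨π, hπ⟩ le_rfl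
    _ ≤ pathCost d' (X.map f) (Y.map f) π + π.length * c := pathCost_le_pathCost_map_add hd hπ
    _ ≤ _ := by
      gcongr
      exact_mod_cast (Nat.le_succ _).trans hπ.length_add_one_le

end Transfer

section Tree

variable {V : Type*} {parent : V → V} {weight : V → ℝ≥0} {c : ℝ≥0}

lemma upMax_add_le {u : V} {n : ℕ} (hu : ∀ k < n, weight (parent^[k] u) ≤ c) (q : ℕ) :
    upMax parent weight u (n + q) ≤ max c (upMax parent weight (parent^[n] u) q) := by
  refine Finset.sup_le fun k hk => ?_
  by_cases hkn : k < n
  · exact le_max_of_le_left (hu k hkn)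
  obtain ⟨j, rfl⟩ := Nat.exists_eq_add_of_le' (not_lt.1 hkn)
  rw [Function.iterate_add_apply]
  exact le_max_of_le_right <| Finset.le_sup (f := fun i => weight (parent^[i] (parent^[n] u)))
    (Finset.mem_range.2 (by rw [Finset.mem_range] at hk; omega))

lemma treeDist_le_max_iterate {a b : V} {na nb : ℕ}
    (ha : ∀ k < na, weight (parent^[k] a) ≤ c) (hb : ∀ k < nb, weight (parent^[k] b) ≤ c) :
    treeDist parent weight a b ≤
      max (c : ℝ≥0∞) (treeDist parent weight (parent^[na] a) (parent^[nb] b)) := by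
  rw [treeDist, treeDist, sup_iInf_eq]
  refine le_iInf fun ⟨⟨qa, qb⟩, hq⟩ => ?_
  have hmeet : parent^[na + qa] a = parent^[nb + qb] b := by
    rwa [add_comm na, add_comm nb, Function.iterate_add_apply, Function.iterate_add_apply]
  refine iInf_le_of_le ⟨(na + qa, nb + qb), hmeet⟩ ?_
  rw [← ENNReal.coe_max, ENNReal.coe_le_coe]
  exact max_le ((upMax_add_le ha qa).trans (max_le_max le_rfl (le_max_left _ _)))
    ((upMax_add_le hb qb).trans (max_le_max le_rfl (le_max_right _ _)))

end Tree

theorem dtw_simplification_gap_general {V : Type*} [Inhabited V]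
    (parent : V → V) (weight : V → ℝ≥0) (root : V)
    (r : ℝ≥0) (s : V → V)
    (hs : ∀ a, ∃ n, parent^[n] a = s a ∧
      (∀ k, k < n → weight (parent^[k] a) ≤ r / 4) ∧
      (s a = root ∨ r / 4 < weight (s a)))
    (L : ℕ) (X Y : List V) (hX : X.length ≤ L) (hY : Y.length ≤ L)
    (hbig : (L : ℝ≥0∞) * (r : ℝ≥0∞) < dtw (treeDist parent weight) X Y) :
    (L : ℝ≥0∞) * (r : ℝ≥0∞) / 2 <
      dtw (treeDist parent weight) (X.map s) (Y.map s) := by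
  have hletter : ∀ a b, treeDist parent weight a b ≤
      treeDist parent weight (s a) (s b) + ((r / 4 : ℝ≥0) : ℝ≥0∞) := fun a b => by
    obtain ⟨na, hna, ha, -⟩ := hs a
    obtain ⟨nb, hnb, hb, -⟩ := hs b
    simpa only [hna, hnb] using
      (treeDist_le_max_iterate ha hb).trans (max_le le_add_self le_self_add)
  have hslack : ((X.length : ℝ≥0∞) + Y.length) * ((r / 4 : ℝ≥0) : ℝ≥0∞) ≤ L * r / 2 := by
    have : ((X.length : ℝ≥0) + Y.length) * (r / 4) ≤ L * r / 2 :=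
      calc _ ≤ (2 * L : ℝ≥0) * (r / 4) := by gcongr; exact_mod_cast (by omega)
        _ = L * r / 2 := by ring
    exact_mod_cast this
  refine lt_of_add_lt_add_right (a := (L : ℝ≥0∞) * r / 2) ?_
  calc (L : ℝ≥0∞) * r / 2 + L * r / 2 = L * r := ENNReal.add_halves _
    _ < dtw (treeDist parent weight) X Y := hbig
    _ ≤ dtw (treeDist parent weight) (X.map s) (Y.map s) +
          (X.length + Y.length) * ((r / 4 : ℝ≥0) : ℝ≥0∞) := dtw_le_dtw_map_add hletter X Y
    _ ≤ dtw (treeDist parent weight) (X.map s) (Y.map s) + L * r / 2 := by gcongr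

/-- if `DTW_{μ_τ}(X,Y) > L·r` for strings of length at most `L`, then
`DTW_{μ_τ}(s_r(X), s_r(Y)) > L·r/2`, where `s` is the `r`-simplification. -/
theorem dtw_simplification_gap {V : Type*} [Inhabited V]
    (parent : V → V) (weight : V → ℝ≥0) (root : V)
    (hroot : parent root = root) (hreach : ∀ v, ∃ n, parent^[n] v = root)
    (hmono : ∀ v, weight v ≤ weight (parent v))
    (r : ℝ≥0) (hr : 1 ≤ r) (s : V → V)
    (hs : ∀ a, ∃ n, parent^[n] a = s a ∧
      (∀ k, k < n → weight (parent^[k] a) ≤ r / 4) ∧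
      (s a = root ∨ r / 4 < weight (s a)))
    (L : ℕ) (X Y : List V) (hX : X.length ≤ L) (hY : Y.length ≤ L)
    (hbig : (L : ℝ≥0∞) * (r : ℝ≥0∞) < dtw (treeDist parent weight) X Y) :
    (L : ℝ≥0∞) * (r : ℝ≥0∞) / 2 <
      dtw (treeDist parent weight) (X.map s) (Y.map s) :=
  dtw_simplification_gap_general parent weight root r s hs L X Y hX hY hbig
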